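/- arXiv:2408.12923 — 5 statements merged into one kernel-verified Lean document; each statement's English description precedes it below -/
import Mathlib

section
/- For every real number $k_2$ with $0 < |k_2| \le \pi$, one has $\int_{-\pi}^{\pi} \frac{1 - B(k_1)e^{ik_2}}{2 - \cos k_1 - \cos k_2}\,\frac{dk_1}{2\pi} \;=\; e^{ik_2}\Big(\sqrt{2}-1 - \frac{\sqrt{2}(1-\cos k_2) + i\sin k_2}{\sqrt{(1-\cos k_2)(3-\cos k_2)}}\Big)$, where the integral is the Bochner integral of the complex-valued integrand over $[-\pi,\pi]$ with respect to Lebesgue measure divided by $2\pi$. -/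
/-!
With `a = 2 - cos k₂`, the identity `B k₁ = (√2 - 1)(√2 + a) - (√2 - 1)(a - cos k₁)` splits the
integrand into a constant plus a constant multiple of `(a - cos k₁)⁻¹`. The latter integrates to
`2π / √(a² - 1)`: with `r = a - √(a² - 1) ∈ (0, 1)`, `(a - cos x)⁻¹` is `1 / √(a² - 1)` times the
Poisson kernel `(1 - r²) / (1 - 2 r cos x + r²)`, whose integral over a period is `2π`. The
remaining coefficient simplifies via `e^{-i k₂} = cos k₂ - i sin k₂`.
-/

open MeasureTheory Real

noncomputable def B (k : ℝ) : ℝ := (Real.sqrt 2 - 1) * (Real.sqrt 2 + Real.cos k)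

theorem HasDerivAt.arctan_div {f g : ℝ → ℝ} {f' g' x : ℝ} (hf : HasDerivAt f f' x)
    (hg : HasDerivAt g g' x) (hgx : g x ≠ 0) :
    HasDerivAt (fun y => Real.arctan (f y / g y))
      ((f' * g x - f x * g') / (f x ^ 2 + g x ^ 2)) x := by
  refine (hf.div hg hgx).arctan.congr_deriv ?_
  have : 0 < f x ^ 2 + g x ^ 2 := by positivity
  simp only [Pi.div_apply]
  field_simp
  ring

theorem one_sub_mul_cos_pos {r : ℝ} (hr : |r| < 1) (x : ℝ) : 0 < 1 - r * cos x := by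
  have : r * cos x < 1 := calc
    r * cos x ≤ |r| * |cos x| := (le_abs_self _).trans (abs_mul _ _).le
    _ ≤ |r| := mul_le_of_le_one_right (abs_nonneg r) (abs_cos_le_one x)
    _ < 1 := hr
  linarith

/-- The primitive comes from integrating `1 + 2 ∑ rⁿ cos (n x)` termwise:
`∑ rⁿ sin (n x) / n = arg (1 - r e^{ix})⁻¹ = arctan (r sin x / (1 - r cos x))`. -/
theorem hasDerivAt_poissonKernel_primitive {r : ℝ} (hr : |r| < 1) (x : ℝ) :
    HasDerivAt (fun y => y + 2 * arctan (r * sin y / (1 - r * cos y)))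
      ((1 - r ^ 2) / (1 - 2 * r * cos x + r ^ 2)) x := by
  have hden := one_sub_mul_cos_pos hr x
  have hsin := (hasDerivAt_sin x).const_mul r
  have hcos := ((hasDerivAt_cos x).const_mul r).const_sub 1
  refine ((hasDerivAt_id x).add ((hsin.arctan_div hcos hden.ne').const_mul 2)).congr_deriv ?_
  have hpyth := sin_sq_add_cos_sq x
  have hsum : (r * sin x) ^ 2 + (1 - r * cos x) ^ 2 = 1 - 2 * r * cos x + r ^ 2 := by
    linear_combination r ^ 2 * hpyth
  rw [hsum]
  have : 0 < 1 - 2 * r * cos x + r ^ 2 := by rw [← hsum]; positivity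
  field_simp
  linear_combination (-2 * r ^ 2) * hpyth

theorem integral_poissonKernel {r : ℝ} (hr : |r| < 1) :
    ∫ x in (-π)..π, (1 - r ^ 2) / (1 - 2 * r * cos x + r ^ 2) = 2 * π := by
  have hpos : ∀ x, 0 < 1 - 2 * r * cos x + r ^ 2 := fun x => by
    nlinarith [one_sub_mul_cos_pos hr x, sin_sq_add_cos_sq x, sq_nonneg (r * sin x)]
  rw [intervalIntegral.integral_eq_sub_of_hasDerivAt
    (fun x _ => hasDerivAt_poissonKernel_primitive hr x)
    ((by fun_prop (disch := exact fun x => (hpos x).ne') : Continuous _).intervalIntegrable _ _)]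
  simp only [sin_pi, sin_neg, cos_pi, cos_neg, neg_zero, mul_zero, zero_div, arctan_zero,
    add_zero]
  ring

theorem integral_inv_sub_cos {a : ℝ} (ha : 1 < a) :
    ∫ x in (-π)..π, (a - cos x)⁻¹ = 2 * π / √(a ^ 2 - 1) := by
  set s := √(a ^ 2 - 1)
  have hs2 : s ^ 2 = a ^ 2 - 1 := sq_sqrt (by nlinarith)
  have hs : 0 < s := sqrt_pos.mpr (by nlinarith)
  set r := a - s
  have hsa : s < a := by nlinarith
  have hr : |r| < 1 := abs_lt.mpr ⟨by linarith, by nlinarith⟩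
  have hkernel : ∀ x, (a - cos x)⁻¹ = (1 - r ^ 2) / (1 - 2 * r * cos x + r ^ 2) / s := by
    intro x
    have hcos : 0 < a - cos x := by linarith [cos_le_one x]
    have hr0 : 0 < r := by linarith
    rw [show 1 - 2 * r * cos x + r ^ 2 = 2 * r * (a - cos x) by linear_combination hs2,
      show 1 - r ^ 2 = 2 * r * s by linear_combination hs2]
    field_simp
  simp_rw [hkernel, intervalIntegral.integral_div, integral_poissonKernel hr]

theorem integral_const_div_sub_cos {a : ℝ} (ha : 1 < a) (c : ℂ) :
    ∫ x in (-π)..π, c / ((a - cos x : ℝ) : ℂ) = c * ((2 * π / √(a ^ 2 - 1) : ℝ) : ℂ) := by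
  simp_rw [div_eq_mul_inv c, ← Complex.ofReal_inv, intervalIntegral.integral_const_mul,
    intervalIntegral.integral_ofReal, integral_inv_sub_cos ha]

theorem integral_div_sub_cos_add_const {a : ℝ} (ha : 1 < a) (c d : ℂ) :
    ∫ x in (-π)..π, (c / ((a - cos x : ℝ) : ℂ) + d)
      = c * ((2 * π / √(a ^ 2 - 1) : ℝ) : ℂ) + 2 * π * d := by
  have hcont : Continuous fun x => c / ((a - cos x : ℝ) : ℂ) := by
    fun_prop (disch := exact fun x => Complex.ofReal_ne_zero.mpr (by linarith [cos_le_one x]))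
  rw [intervalIntegral.integral_add (hcont.intervalIntegrable _ _) intervalIntegrable_const,
    integral_const_div_sub_cos ha, intervalIntegral.integral_const, Complex.real_smul]
  push_cast
  ring

theorem one_sub_B_mul_div_sub_cos {a x : ℝ} (hx : a - cos x ≠ 0) (e : ℂ) :
    (1 - (B x : ℂ) * e) / ((a - cos x : ℝ) : ℂ)
      = (1 - (√2 - 1) * (√2 + a) * e) / ((a - cos x : ℝ) : ℂ) + (√2 - 1) * e := by
  set d : ℂ := ((a - cos x : ℝ) : ℂ)
  have hd : d ≠ 0 := Complex.ofReal_ne_zero.mpr hx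
  have hB : (B x : ℂ) = (√2 - 1) * (√2 + a - d) := by simp only [B, d]; push_cast; ring
  rw [hB]
  field_simp
  ring

theorem one_sub_sqrt_two_sub_one_mul_exp_mul_I (t : ℝ) :
    1 - (√2 - 1) * (√2 + (2 - cos t : ℝ)) * Complex.exp (Complex.I * t)
      = -Complex.exp (Complex.I * t) *
          (((√2 * (1 - cos t) : ℝ) : ℂ) + Complex.I * (sin t : ℝ)) := by
  have hsqrt : ((√2 : ℝ) : ℂ) ^ 2 = 2 := by exact_mod_cast sq_sqrt zero_le_two
  rw [mul_comm Complex.I, Complex.exp_mul_I]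
  push_cast
  linear_combination -Complex.sin_sq_add_cos_sq (t : ℂ) + Complex.sin t ^ 2 * Complex.I_sq
    - (Complex.cos t + Complex.sin t * Complex.I) * hsqrt

/-- For `0 < |k₂| ≤ π`, the horizontal-momentum integral of the critical Ising propagator:
`∫_{-π}^{π} (1 - B(k₁) e^{i k₂}) / (2 - cos k₁ - cos k₂) dk₁/(2π)
  = e^{i k₂} (√2 - 1 - (√2 (1 - cos k₂) + i sin k₂)/√((1-cos k₂)(3-cos k₂)))`. -/
theorem stmt_0 (k₂ : ℝ) (h0 : 0 < |k₂|) (hπ : |k₂| ≤ π) :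
    (∫ k₁ in Set.Icc (-π) π,
        (1 - (B k₁ : ℂ) * Complex.exp (Complex.I * (k₂ : ℂ))) /
          ((↑(2 - Real.cos k₁ - Real.cos k₂) : ℂ))) / (2 * (π : ℂ))
      =
    Complex.exp (Complex.I * (k₂ : ℂ)) *
      ((↑(Real.sqrt 2 - 1) : ℂ) -
        ((↑(Real.sqrt 2 * (1 - Real.cos k₂)) : ℂ) + Complex.I * (↑(Real.sin k₂) : ℂ)) /
          (↑(Real.sqrt ((1 - Real.cos k₂) * (3 - Real.cos k₂))) : ℂ)) := by
  have hcos : cos k₂ < 1 := by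
    simpa using cos_lt_cos_of_nonneg_of_le_pi le_rfl hπ h0
  set a := 2 - cos k₂
  have hsplit : ∀ k₁,
      (1 - (B k₁ : ℂ) * Complex.exp (Complex.I * k₂)) / ((2 - cos k₁ - cos k₂ : ℝ) : ℂ)
      = (1 - (√2 - 1) * (√2 + a) * Complex.exp (Complex.I * k₂)) / ((a - cos k₁ : ℝ) : ℂ)
        + (√2 - 1) * Complex.exp (Complex.I * k₂) := fun k₁ => by
    rw [show 2 - cos k₁ - cos k₂ = a - cos k₁ by ring]
    exact one_sub_B_mul_div_sub_cos (by linarith [cos_le_one k₁]) _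
  rw [integral_Icc_eq_integral_Ioc, ← intervalIntegral.integral_of_le (by linarith [pi_pos]),
    intervalIntegral.integral_congr (fun k₁ _ => hsplit k₁),
    integral_div_sub_cos_add_const (by linarith), one_sub_sqrt_two_sub_one_mul_exp_mul_I,
    show a ^ 2 - 1 = (1 - cos k₂) * (3 - cos k₂) by ring]
  have hπ0 : (π : ℂ) ≠ 0 := Complex.ofReal_ne_zero.mpr pi_ne_zero
  push_cast
  field_simp
  ring
end

section
/- One has $\frac{\sqrt{2}+1}{2}\int_{-\pi}^{\pi} \frac{\sqrt{2}\,(1-\cos k)^2 + \sin^2 k}{\sqrt{(1-\cos k)(3-\cos k)}}\,\frac{dk}{2\pi} \;=\; \frac{1+\sqrt{2}}{2} + \frac{1}{\pi}$, where the integral is over $[-\pi,\pi]$ with respect to Lebesgue measure divided by $2\pi$. -/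
/-!
With `s = sin (k / 2)` one has `1 - cos k = 2 s²`, `3 - cos k = 2 (1 + s²)` and
`sin² k = 4 s² (1 - s²)`, so the integrand is the continuous even function
`2 |s| (1 + (√2 - 1) s²) / √(1 + s²)`. On `[0, π]` this is the derivative of `G (cos (k / 2))`,
where `G c = -4 arcsin (c / √2) - 2 (√2 - 1) c √(2 - c²)`, so the integral over `[-π, π]` is
`2 (G 0 - G 1) = 2 (π + 2 (√2 - 1))`.
-/

open MeasureTheory Real

theorem intervalIntegral.integral_symmetric_eq_two_smul_of_even {E : Type*} [NormedAddCommGroup E]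
    [NormedSpace ℝ E] {f : ℝ → E} {a : ℝ} (hf : ∀ x, f (-x) = f x)
    (hint : IntervalIntegrable f volume (-a) a) :
    ∫ x in -a..a, f x = (2 : ℝ) • ∫ x in 0..a, f x := by
  have hzero : (0 : ℝ) ∈ Set.uIcc (-a) a := by
    rw [Set.mem_uIcc]; grind
  have hleft : ∫ x in -a..0, f x = ∫ x in 0..a, f x := by
    simpa [hf] using (intervalIntegral.integral_comp_neg (a := 0) (b := a) (f := f)).symm
  rw [← intervalIntegral.integral_add_adjacent_intervals
    (hint.mono_set (Set.uIcc_subset_uIcc_left hzero))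
    (hint.mono_set (Set.uIcc_subset_uIcc_right hzero)), hleft, two_smul]

lemma ising_integrand_eq_half_angle (k : ℝ) :
    (√2 * (1 - cos k) ^ 2 + sin k ^ 2) / √((1 - cos k) * (3 - cos k)) =
      2 * |sin (k / 2)| * (1 + (√2 - 1) * sin (k / 2) ^ 2) / √(1 + sin (k / 2) ^ 2) := by
  set s := sin (k / 2)
  have hcos : cos k = 1 - 2 * s ^ 2 := by rw [← cos_two_mul_eq_one_sub]; ring_nf
  have hsin : sin k ^ 2 = 4 * s ^ 2 * (1 - s ^ 2) := by
    rw [show k = 2 * (k / 2) by ring, sin_two_mul, mul_pow, cos_sq']; ring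
  have hden : √((1 - cos k) * (3 - cos k)) = 2 * |s| * √(1 + s ^ 2) := by
    rw [hcos, show (1 - (1 - 2 * s ^ 2)) * (3 - (1 - 2 * s ^ 2)) = (2 * |s|) ^ 2 * (1 + s ^ 2) by
      rw [mul_pow, sq_abs]; ring, sqrt_mul (sq_nonneg _), sqrt_sq (by positivity)]
  have hnum : √2 * (1 - cos k) ^ 2 + sin k ^ 2 = 2 * |s| * (2 * |s| * (1 + (√2 - 1) * s ^ 2)) := by
    rw [hcos, hsin]; linear_combination (-4 * (1 + (√2 - 1) * s ^ 2)) * sq_abs s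
  rw [hnum, hden]
  rcases eq_or_ne s 0 with hs | hs
  · simp [hs]
  · exact mul_div_mul_left _ _ (by positivity)

noncomputable def isingPrimitive (c : ℝ) : ℝ :=
  -4 * arcsin (c / √2) - 2 * (√2 - 1) * (c * √(2 - c ^ 2))

lemma hasDerivAt_isingPrimitive {c : ℝ} (hc : c ^ 2 < 2) :
    HasDerivAt isingPrimitive (-4 * (1 + (√2 - 1) * (1 - c ^ 2)) / √(2 - c ^ 2)) c := by
  have h2 : (0 : ℝ) < √2 := by positivity
  have hpos : 0 < 2 - c ^ 2 := by linarith
  have hlt : |c / √2| < 1 := by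
    rw [abs_div, abs_of_pos h2, div_lt_one h2, ← sqrt_sq_eq_abs]
    exact sqrt_lt_sqrt (sq_nonneg c) hc
  have harcsin := (hasDerivAt_arcsin (by grind) (by grind)).comp c ((hasDerivAt_id c).div_const √2)
  have hsqrt := ((hasDerivAt_id c).pow 2).const_sub 2 |>.sqrt hpos.ne'
  refine ((harcsin.const_mul (-4)).sub
    (((hasDerivAt_id c).mul hsqrt).const_mul (2 * (√2 - 1)))).congr_deriv ?_
  have hq : √(1 - (c / √2) ^ 2) = √(2 - c ^ 2) / √2 := by
    rw [← sqrt_div hpos.le, div_pow, sq_sqrt zero_le_two]; congr 1; field_simp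
  have hs : √(2 - c ^ 2) ^ 2 = 2 - c ^ 2 := sq_sqrt hpos.le
  simp only [id, Pi.pow_apply, hq]
  field_simp
  linear_combination (-2 * (√2 - 1)) * hs

lemma hasDerivAt_isingPrimitive_cos_half (k : ℝ) :
    HasDerivAt (fun k ↦ isingPrimitive (cos (k / 2)))
      (2 * sin (k / 2) * (1 + (√2 - 1) * sin (k / 2) ^ 2) / √(1 + sin (k / 2) ^ 2)) k := by
  have hc : cos (k / 2) ^ 2 < 2 := by nlinarith [cos_sq_le_one (k / 2)]
  refine ((hasDerivAt_isingPrimitive hc).comp k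
    ((hasDerivAt_id k).div_const 2).cos).congr_deriv ?_
  rw [cos_sq', show 2 - (1 - sin (k / 2) ^ 2) = 1 + sin (k / 2) ^ 2 by ring]
  simp only [id]
  ring

lemma integral_ising_integrand_half_angle :
    ∫ k in (0 : ℝ)..π, 2 * |sin (k / 2)| * (1 + (√2 - 1) * sin (k / 2) ^ 2) / √(1 + sin (k / 2) ^ 2)
      = π + 2 * (√2 - 1) := by
  have hcont : Continuous fun k ↦
      2 * sin (k / 2) * (1 + (√2 - 1) * sin (k / 2) ^ 2) / √(1 + sin (k / 2) ^ 2) := by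
    fun_prop (disch := exact fun k ↦ (sqrt_pos.2 (by positivity)).ne')
  rw [intervalIntegral.integral_congr (g := fun k ↦
      2 * sin (k / 2) * (1 + (√2 - 1) * sin (k / 2) ^ 2) / √(1 + sin (k / 2) ^ 2)),
    intervalIntegral.integral_eq_sub_of_hasDerivAt
      (fun k _ ↦ hasDerivAt_isingPrimitive_cos_half k) (hcont.intervalIntegrable _ _)]
  · have harcsin : arcsin (√2)⁻¹ = π / 4 := by
      rw [show (√2)⁻¹ = √2 / 2 by field_simp; simp, ← sin_pi_div_four,
        arcsin_sin (by linarith [pi_pos]) (by linarith [pi_pos])]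
    simp [isingPrimitive, harcsin]
    ring
  · intro k hk
    rw [Set.uIcc_of_le pi_pos.le] at hk
    have hk2 : k / 2 ≤ π := by linarith [hk.2, pi_pos]
    dsimp only
    rw [abs_of_nonneg (sin_nonneg_of_nonneg_of_le_pi (by linarith [hk.1]) hk2)]

/-- `((√2+1)/2) ∫_{-π}^{π} (√2 (1-cos k)² + sin² k)/√((1-cos k)(3-cos k)) dk/(2π)
      = (1+√2)/2 + 1/π`. -/
theorem stmt_3 :
    (Real.sqrt 2 + 1) / 2 *
      ((∫ k in Set.Icc (-π) π,
          (Real.sqrt 2 * (1 - Real.cos k) ^ 2 + Real.sin k ^ 2) /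
            Real.sqrt ((1 - Real.cos k) * (3 - Real.cos k))) / (2 * π))
      = (1 + Real.sqrt 2) / 2 + 1 / π := by
  have hcont : Continuous fun k ↦
      2 * |sin (k / 2)| * (1 + (√2 - 1) * sin (k / 2) ^ 2) / √(1 + sin (k / 2) ^ 2) := by
    fun_prop (disch := exact fun k ↦ (sqrt_pos.2 (by positivity)).ne')
  have hintegral : (∫ k in Set.Icc (-π) π,
      (√2 * (1 - cos k) ^ 2 + sin k ^ 2) / √((1 - cos k) * (3 - cos k))) =
        2 * (π + 2 * (√2 - 1)) := by
    rw [integral_Icc_eq_integral_Ioc, ← intervalIntegral.integral_of_le (by linarith [pi_pos])]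
    simp_rw [ising_integrand_eq_half_angle]
    rw [intervalIntegral.integral_symmetric_eq_two_smul_of_even (fun k ↦ by simp [neg_div])
      (hcont.intervalIntegrable _ _), integral_ising_integrand_half_angle, smul_eq_mul]
  rw [hintegral]
  field_simp
  linear_combination 2 * sq_sqrt (zero_le_two : (0 : ℝ) ≤ 2)
end

section
/- One has $\frac{\sqrt{2}+1}{2}\int_{-\pi}^{\pi} \frac{\sqrt{2}\,(1-\cos k)^2 - \sin^2 k}{\sqrt{(1-\cos k)(3-\cos k)}}\,\frac{dk}{2\pi} \;=\; -\frac{1}{2} - \frac{\sqrt{2}}{2} + \frac{(\sqrt{2}+1)^2}{\pi}$, where the integral is over $[-\pi,\pi]$ with respect to Lebesgue measure divided by $2\pi$. -/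
/-!
Write `s = sin (k / 2)`, `c = cos (k / 2)` and, more generally, `a` for the coefficient `√2`.
On `[0, π]` the integrand equals `2 s ((a + 1) s² - 1) / √(2 - c²)`, which in the variable `c`
reads `-4 ((a + 1) c² - a) / √(2 - c²) dc`. Since `(1 - c²) / √(2 - c²)` is half the derivative
of `c √(2 - c²)` and `1 / √(2 - c²)` is the derivative of `arcsin (c / √2)`, this has the
elementary primitive `4 arcsin (c / √2) - 2 (a + 1) c √(2 - c²)`, and `∫₀^π = 2 (a + 1) - π`.
The integrand is even, so the integral over `[-π, π]` is twice that.
-/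

open MeasureTheory Real

theorem integral_neg_to_self_eq_two_smul_of_even {E : Type*} [NormedAddCommGroup E]
    [NormedSpace ℝ E] {f : ℝ → E} (heven : ∀ x, f (-x) = f x) {a : ℝ}
    (hf : IntervalIntegrable f volume 0 a) :
    ∫ x in -a..a, f x = (2 : ℝ) • ∫ x in 0..a, f x := by
  have hneg : ∫ x in -a..0, f x = ∫ x in 0..a, f x := by
    simpa [heven] using (intervalIntegral.integral_comp_neg (a := 0) (b := a) f).symm
  have hint : IntervalIntegrable f volume (-a) 0 := by
    simpa [heven] using ((IntervalIntegrable.iff_comp_neg).mp hf).symm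
  rw [← intervalIntegral.integral_add_adjacent_intervals hint hf, hneg, two_smul]

theorem hasDerivAt_arcsin_div_sqrt_two {c : ℝ} (hc : c ^ 2 < 2) :
    HasDerivAt (fun c ↦ arcsin (c / √2)) (1 / √(2 - c ^ 2)) c := by
  have hsq : (c / √2) ^ 2 = c ^ 2 / 2 := by rw [div_pow, sq_sqrt zero_le_two]
  have habs : |c / √2| < 1 := by
    rw [← sq_lt_one_iff_abs_lt_one, hsq]; linarith
  refine ((hasDerivAt_arcsin (by linarith [abs_lt.mp habs]) (by linarith [abs_lt.mp habs])).comp c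
    ((hasDerivAt_id' c).div_const √2)).congr_deriv ?_
  rw [hsq, show 1 - c ^ 2 / 2 = (2 - c ^ 2) / 2 by ring, sqrt_div' _ zero_le_two]
  have : √2 ≠ 0 := by positivity
  field_simp

theorem hasDerivAt_mul_sqrt_two_sub_sq {c : ℝ} (hc : c ^ 2 < 2) :
    HasDerivAt (fun c ↦ c * √(2 - c ^ 2)) (2 * (1 - c ^ 2) / √(2 - c ^ 2)) c := by
  have hpos : 0 < 2 - c ^ 2 := by linarith
  have hinner : HasDerivAt (fun c ↦ 2 - c ^ 2) (-(2 * c)) c := by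
    simpa using ((hasDerivAt_pow 2 c).const_sub 2)
  refine ((hasDerivAt_id' c).mul (hinner.sqrt hpos.ne')).congr_deriv ?_
  have hq : √(2 - c ^ 2) ≠ 0 := by positivity
  field_simp
  rw [sq_sqrt hpos.le]
  ring

theorem sq_cos_lt_two (x : ℝ) : cos x ^ 2 < 2 := by
  nlinarith [cos_sq_le_one x]

section

variable (a : ℝ)

noncomputable def spinIntegrand (k : ℝ) : ℝ :=
  (a * (1 - cos k) ^ 2 - sin k ^ 2) / √((1 - cos k) * (3 - cos k))

noncomputable def halfAngleIntegrand (c : ℝ) : ℝ :=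
  4 * ((a + 1) * c ^ 2 - a) / √(2 - c ^ 2)

noncomputable def halfAnglePrimitive (c : ℝ) : ℝ :=
  4 * arcsin (c / √2) - 2 * (a + 1) * (c * √(2 - c ^ 2))

theorem hasDerivAt_halfAnglePrimitive {c : ℝ} (hc : c ^ 2 < 2) :
    HasDerivAt (halfAnglePrimitive a) (halfAngleIntegrand a c) c := by
  refine (((hasDerivAt_arcsin_div_sqrt_two hc).const_mul 4).sub
    ((hasDerivAt_mul_sqrt_two_sub_sq hc).const_mul (2 * (a + 1)))).congr_deriv ?_
  rw [halfAngleIntegrand]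
  ring

theorem spinIntegrand_eq_halfAngleIntegrand {k : ℝ} (hk : 0 ≤ sin (k / 2)) :
    spinIntegrand a k = halfAngleIntegrand a (cos (k / 2)) * (-(sin (k / 2) / 2)) := by
  set s := sin (k / 2)
  set c := cos (k / 2)
  have hsc : s ^ 2 + c ^ 2 = 1 := sin_sq_add_cos_sq _
  have hcos : cos k = 2 * c ^ 2 - 1 := by rw [← cos_two_mul, mul_div_cancel₀ k two_ne_zero]
  have hsin : sin k = 2 * s * c := by rw [← sin_two_mul, mul_div_cancel₀ k two_ne_zero]
  have hq : 0 < √(2 - c ^ 2) := sqrt_pos.mpr (by linarith [sq_cos_lt_two (k / 2)])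
  have hden : √((1 - cos k) * (3 - cos k)) = 2 * s * √(2 - c ^ 2) := by
    rw [show (1 - cos k) * (3 - cos k) = (2 * s) ^ 2 * (2 - c ^ 2) by
      rw [hcos]; linear_combination (-4 * (2 - c ^ 2)) * hsc,
      sqrt_mul (sq_nonneg _), sqrt_sq (by linarith)]
  have hnum : a * (1 - cos k) ^ 2 - sin k ^ 2 = 4 * s ^ 2 * ((a + 1) * s ^ 2 - 1) := by
    rw [hcos, hsin]; linear_combination (-(4 * a * (1 - c ^ 2 + s ^ 2) + 4 * s ^ 2)) * hsc
  rw [spinIntegrand, hden, hnum, halfAngleIntegrand]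
  rcases hk.eq_or_lt with hs0 | hs0
  · -- at `s = 0` (`k ≡ 0 mod 2π`) both sides vanish, the left one as `0 / 0`
    simp [← hs0]
  · field_simp
    linear_combination (a + 1) * hsc

theorem halfAnglePrimitive_zero : halfAnglePrimitive a 0 = 0 := by
  simp [halfAnglePrimitive]

theorem halfAnglePrimitive_one : halfAnglePrimitive a 1 = π - 2 * (a + 1) := by
  have harcsin : arcsin (√2)⁻¹ = π / 4 := by
    refine arcsin_eq_of_sin_eq ?_ ⟨by linarith [pi_pos], by linarith [pi_pos]⟩
    rw [sin_pi_div_four]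
    field_simp
    rw [sq_sqrt zero_le_two]
  norm_num [halfAnglePrimitive, harcsin]
  ring

theorem continuous_halfAngleIntegrand_cos_mul :
    Continuous fun k ↦ halfAngleIntegrand a (cos (k / 2)) * (-(sin (k / 2) / 2)) := by
  refine .mul (.div (by fun_prop) (by fun_prop) fun k ↦ ?_) (by fun_prop)
  exact (sqrt_pos.mpr (by linarith [sq_cos_lt_two (k / 2)])).ne'

theorem integral_halfAngleIntegrand_cos_mul :
    ∫ k in 0..π, halfAngleIntegrand a (cos (k / 2)) * (-(sin (k / 2) / 2)) =
      2 * (a + 1) - π := by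
  have hderiv : ∀ k, HasDerivAt (fun k ↦ halfAnglePrimitive a (cos (k / 2)))
      (halfAngleIntegrand a (cos (k / 2)) * (-(sin (k / 2) / 2))) k := fun k ↦ by
    have hcos : HasDerivAt (fun k ↦ cos (k / 2)) (-(sin (k / 2) / 2)) k :=
      ((hasDerivAt_id' k).div_const 2).cos.congr_deriv (by ring)
    exact (hasDerivAt_halfAnglePrimitive a (sq_cos_lt_two (k / 2))).comp k hcos
  rw [intervalIntegral.integral_eq_sub_of_hasDerivAt (fun k _ ↦ hderiv k)
    ((continuous_halfAngleIntegrand_cos_mul a).intervalIntegrable 0 π)]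
  simp [cos_pi_div_two, halfAnglePrimitive_zero, halfAnglePrimitive_one]

theorem spinIntegrand_neg (k : ℝ) : spinIntegrand a (-k) = spinIntegrand a k := by
  simp [spinIntegrand]

theorem integral_spinIntegrand :
    ∫ k in -π..π, spinIntegrand a k = 2 * (2 * (a + 1) - π) := by
  have hEqOn : Set.EqOn (spinIntegrand a)
      (fun k ↦ halfAngleIntegrand a (cos (k / 2)) * (-(sin (k / 2) / 2))) (Set.uIcc 0 π) := by
    intro k hk
    rw [Set.uIcc_of_le pi_pos.le] at hk
    exact spinIntegrand_eq_halfAngleIntegrand a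
      (sin_nonneg_of_nonneg_of_le_pi (by linarith [hk.1]) (by linarith [hk.2, pi_pos]))
  have hint : IntervalIntegrable (spinIntegrand a) volume 0 π :=
    ((continuous_halfAngleIntegrand_cos_mul a).intervalIntegrable 0 π).congr
      (hEqOn.symm.mono Set.uIoc_subset_uIcc)
  rw [integral_neg_to_self_eq_two_smul_of_even (spinIntegrand_neg a) hint,
    intervalIntegral.integral_congr hEqOn, integral_halfAngleIntegrand_cos_mul, smul_eq_mul]

end

/-- `((√2+1)/2) ∫_{-π}^{π} (√2 (1-cos k)² - sin² k)/√((1-cos k)(3-cos k)) dk/(2π)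
      = -1/2 - √2/2 + (√2+1)²/π`. -/
theorem stmt_4 :
    (Real.sqrt 2 + 1) / 2 *
      ((∫ k in Set.Icc (-π) π,
          (Real.sqrt 2 * (1 - Real.cos k) ^ 2 - Real.sin k ^ 2) /
            Real.sqrt ((1 - Real.cos k) * (3 - Real.cos k))) / (2 * π))
      = -(1 / 2) - Real.sqrt 2 / 2 + (Real.sqrt 2 + 1) ^ 2 / π := by
  rw [integral_Icc_eq_integral_Ioc, ← intervalIntegral.integral_of_le (by linarith [pi_pos])]
  have h := integral_spinIntegrand √2
  simp only [spinIntegrand] at h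
  rw [h]
  field_simp
  ring
end

section
/- One has $\frac{\sqrt{2}+1}{2}\int_{-\pi}^{\pi} \frac{\sqrt{2}\,(1-\cos k)\cos k + \sin^2 k}{\sqrt{(1-\cos k)(3-\cos k)}}\,\frac{dk}{2\pi} \;=\; \frac{(\sqrt{2}+1)^2}{4}\Big(\sqrt{2} - \frac{4}{\pi}\Big)$, where the integral is over $[-\pi,\pi]$ with respect to Lebesgue measure divided by $2\pi$. -/
open MeasureTheory Real

/-!
Put `c = cos (k/2)` and `s = sin (k/2)`. Then `1 - cos k = 2 s²`, `3 - cos k = 2 (2 - c²)`, and the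
integrand becomes `|s| · h c` with `h u = (2(1+√2)u² - √2) / √(2 - u²)`, a function with the elementary
primitive `H u = (2+√2) arcsin (u/√2) - (1+√2) u √(2 - u²)`. The integrand is even and
`d/dk (-2 H c) = s · h c`, so the integral over `[-π, π]` is `4 (H 1 - H 0) = (2+√2)π - 4(1+√2)`.
-/

theorem intervalIntegral.integral_neg_self_eq_two_smul_of_even {E : Type*}
    [NormedAddCommGroup E] [NormedSpace ℝ E] {f : ℝ → E} {a : ℝ} (hf : ∀ x, f (-x) = f x)
    (hfi : IntervalIntegrable f volume 0 a) :
    ∫ x in -a..a, f x = (2 : ℝ) • ∫ x in 0..a, f x := by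
  have hreflect : ∫ x in -a..0, f x = ∫ x in 0..a, f x := by
    simpa [hf] using (intervalIntegral.integral_comp_neg (a := 0) (b := a) f).symm
  have hfi' : IntervalIntegrable f volume (-a) 0 := by
    simpa [hf] using (IntervalIntegrable.iff_comp_neg (f := f)).mp hfi.symm
  rw [← intervalIntegral.integral_add_adjacent_intervals hfi' hfi, hreflect, two_smul]

noncomputable def reducedIntegrand (u : ℝ) : ℝ :=
  (2 * (1 + √2) * u ^ 2 - √2) / √(2 - u ^ 2)

noncomputable def reducedPrimitive (u : ℝ) : ℝ :=
  (2 + √2) * arcsin (u / √2) - (1 + √2) * u * √(2 - u ^ 2)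

theorem hasDerivAt_reducedPrimitive {u : ℝ} (hu : u ^ 2 < 2) :
    HasDerivAt reducedPrimitive (reducedIntegrand u) u := by
  have hpos : 0 < 2 - u ^ 2 := by linarith
  have hsqrt2 : 0 < √2 := by positivity
  have hroot : HasDerivAt (fun u => √(2 - u ^ 2)) (-u / √(2 - u ^ 2)) u := by
    refine (((hasDerivAt_pow 2 u).const_sub 2).sqrt hpos.ne').congr_deriv ?_
    field_simp
    ring
  have hratio : |u / √2| < 1 := by
    rw [abs_div, abs_of_pos hsqrt2, div_lt_one hsqrt2, ← sqrt_sq_eq_abs]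
    exact sqrt_lt_sqrt (sq_nonneg u) hu
  have harcsin : HasDerivAt (fun u => arcsin (u / √2)) (1 / √(2 - u ^ 2)) u := by
    refine ((hasDerivAt_arcsin (abs_lt.mp hratio).1.ne' (abs_lt.mp hratio).2.ne).comp u
      ((hasDerivAt_id u).div_const √2)).congr_deriv ?_
    rw [div_pow, sq_sqrt zero_le_two, one_sub_div two_ne_zero, sqrt_div hpos.le]
    field_simp
  refine ((harcsin.const_mul (2 + √2)).sub
    (((hasDerivAt_id u).const_mul (1 + √2)).mul hroot)).congr_deriv ?_
  rw [reducedIntegrand]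
  field_simp
  simp only [id]
  linear_combination (-√2 - 1) * sq_sqrt hpos.le

theorem reducedPrimitive_one : reducedPrimitive 1 = (2 + √2) * (π / 4) - (1 + √2) := by
  have harcsin : arcsin (1 / √2) = π / 4 := by
    have hsin : 1 / √2 = sin (π / 4) := by
      rw [sin_pi_div_four]
      field_simp
      exact (sq_sqrt zero_le_two).symm
    rw [hsin, arcsin_sin (by linarith [pi_pos]) (by linarith [pi_pos])]
  rw [reducedPrimitive, harcsin]
  norm_num

theorem continuous_reducedIntegrand_cos : Continuous fun k => reducedIntegrand (cos k) := by
  refine Continuous.div (by fun_prop) (by fun_prop) fun k => ?_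
  have : cos k ^ 2 < 2 := by linarith [cos_sq_le_one k]
  exact (sqrt_pos.mpr (by linarith)).ne'

theorem hasDerivAt_reducedPrimitive_cos_half (k : ℝ) :
    HasDerivAt (fun k => -2 * reducedPrimitive (cos (k / 2)))
      (sin (k / 2) * reducedIntegrand (cos (k / 2))) k := by
  have hcos : cos (k / 2) ^ 2 < 2 := by linarith [cos_sq_le_one (k / 2)]
  refine (((hasDerivAt_reducedPrimitive hcos).comp k ((hasDerivAt_cos (k / 2)).comp k
    ((hasDerivAt_id k).div_const 2))).const_mul (-2)).congr_deriv ?_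
  ring

noncomputable def edgeIntegrand (k : ℝ) : ℝ :=
  (√2 * (1 - cos k) * cos k + sin k ^ 2) / √((1 - cos k) * (3 - cos k))

theorem edgeIntegrand_neg (k : ℝ) : edgeIntegrand (-k) = edgeIntegrand k := by
  simp [edgeIntegrand]

theorem edgeIntegrand_eq_abs_sin_half_mul (k : ℝ) :
    edgeIntegrand k = |sin (k / 2)| * reducedIntegrand (cos (k / 2)) := by
  set c := cos (k / 2)
  set s := sin (k / 2)
  have hsc : s ^ 2 = 1 - c ^ 2 := sin_sq (k / 2)
  have hcos : cos k = 2 * c ^ 2 - 1 := by rw [← cos_two_mul]; ring_nf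
  have hsin : sin k = 2 * s * c := by rw [← sin_two_mul]; ring_nf
  have hnum : √2 * (1 - cos k) * cos k + sin k ^ 2
      = 2 * |s| ^ 2 * (2 * (1 + √2) * c ^ 2 - √2) := by
    rw [hcos, hsin, sq_abs]
    linear_combination (2 * √2 - 4 * √2 * c ^ 2) * hsc
  have hden : √((1 - cos k) * (3 - cos k)) = 2 * |s| * √(2 - c ^ 2) := by
    have : (1 - cos k) * (3 - cos k) = (2 * |s|) ^ 2 * (2 - c ^ 2) := by
      rw [hcos, mul_pow, sq_abs]
      linear_combination (4 * c ^ 2 - 8) * hsc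
    rw [this, sqrt_mul (sq_nonneg _), sqrt_sq (by positivity)]
  rw [edgeIntegrand, hnum, hden, reducedIntegrand]
  rcases eq_or_ne |s| 0 with hs | hs
  · simp [hs]
  · field_simp

theorem continuous_edgeIntegrand : Continuous edgeIntegrand := by
  simp only [funext edgeIntegrand_eq_abs_sin_half_mul]
  exact (continuous_sin.comp (continuous_id.div_const 2)).abs.mul
    (continuous_reducedIntegrand_cos.comp (continuous_id.div_const 2))

theorem integral_edgeIntegrand_zero_pi :
    ∫ k in 0..π, edgeIntegrand k = 2 * reducedPrimitive 1 := by
  have heq : Set.EqOn edgeIntegrand (fun k => sin (k / 2) * reducedIntegrand (cos (k / 2)))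
      (Set.uIcc 0 π) := by
    intro k hk
    rw [Set.uIcc_of_le pi_pos.le] at hk
    rw [edgeIntegrand_eq_abs_sin_half_mul, abs_of_nonneg
      (sin_nonneg_of_nonneg_of_le_pi (by linarith [hk.1]) (by linarith [hk.2, pi_pos]))]
  rw [intervalIntegral.integral_congr heq, intervalIntegral.integral_eq_sub_of_hasDerivAt
    (fun k _ => hasDerivAt_reducedPrimitive_cos_half k)
    (continuous_edgeIntegrand.continuousOn.congr heq.symm).intervalIntegrable]
  simp [reducedPrimitive]

theorem integral_Icc_edgeIntegrand :
    ∫ k in Set.Icc (-π) π, edgeIntegrand k = 4 * reducedPrimitive 1 := by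
  rw [integral_Icc_eq_integral_Ioc, ← intervalIntegral.integral_of_le (by linarith [pi_pos]),
    intervalIntegral.integral_neg_self_eq_two_smul_of_even edgeIntegrand_neg
      (continuous_edgeIntegrand.intervalIntegrable 0 π),
    integral_edgeIntegrand_zero_pi, smul_eq_mul]
  ring

/-- `((√2+1)/2) ∫_{-π}^{π} (√2 (1-cos k) cos k + sin² k)/√((1-cos k)(3-cos k)) dk/(2π)
      = ((√2+1)²/4)(√2 - 4/π)`. -/
theorem stmt_5 :
    (Real.sqrt 2 + 1) / 2 *
      ((∫ k in Set.Icc (-π) π,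
          (Real.sqrt 2 * (1 - Real.cos k) * Real.cos k + Real.sin k ^ 2) /
            Real.sqrt ((1 - Real.cos k) * (3 - Real.cos k))) / (2 * π))
      = (Real.sqrt 2 + 1) ^ 2 / 4 * (Real.sqrt 2 - 4 / π) := by
  have hintegral := integral_Icc_edgeIntegrand
  simp only [edgeIntegrand] at hintegral
  rw [hintegral, reducedPrimitive_one]
  field_simp
  linear_combination (-4 * π) * sq_sqrt (zero_le_two (α := ℝ))
end

section
/- For every natural number $m$, $A_{m+1} = \sum_{k=0}^{m} \binom{m}{k}\,(k+1)!\,A_{m-k}$, where $A_m := \sum_{P} \prod_{Y \in P} |Y|!$, the sum ranging over all set partitions $P$ of $\{1,\dots,m\}$ and $|Y|$ denoting the cardinality of a block of $P$ (with the convention $A_0 = 1$). -/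
open Finset

/-- `A m = ∑_P ∏_{Y ∈ P} |Y|!`, the sum over all set partitions `P` of `{1,…,m}`
(with `A 0 = 1`, corresponding to the empty partition). -/
def A (m : ℕ) : ℕ :=
  ∑ P : Finpartition (Finset.univ : Finset (Fin m)), ∏ Y ∈ P.parts, Y.card.factorial

/-!
Classifying the partitions of `insert a s` by the block `insert a T` (with `T ⊆ s`) containing `a`
gives `W (insert a s) = ∑_{T ⊆ s} x (|T| + 1) W (s \ T)` for the weighted partition sum
`W s = ∑_P ∏_{Y ∈ P} x |Y|`: removing that block is a bijection onto the partitions of `s \ T`.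
By strong induction `W s` then depends only on `|s|`, through the recursion of the complete Bell
polynomials, and for `x = (·)!` this is the stated recursion.
-/

theorem Finpartition.parts_avoid_of_mem {α : Type*} [GeneralizedBooleanAlgebra α] [DecidableEq α]
    {a b : α} (P : Finpartition a) (hb : b ∈ P.parts) : (P.avoid b).parts = P.parts.erase b := by
  ext c
  rw [Finpartition.mem_avoid, mem_erase]
  constructor
  · rintro ⟨d, hd, hdb, rfl⟩
    have hne : d ≠ b := fun h => hdb (h ▸ le_rfl)
    have hdisj : Disjoint d b := P.disjoint hd hb hne
    rw [hdisj.sdiff_eq_left]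
    exact ⟨hne, hd⟩
  · rintro ⟨hne, hc⟩
    have hdisj : Disjoint c b := P.disjoint hc hb hne
    exact ⟨c, hc, fun hle => P.ne_bot hc (hdisj.eq_bot_of_le hle), hdisj.sdiff_eq_left⟩

section PartitionWeight

variable {R : Type*} [CommSemiring R] (x : ℕ → R) {α : Type*} [DecidableEq α]

def partitionWeight (s : Finset α) : R :=
  ∑ P : Finpartition s, ∏ Y ∈ P.parts, x #Y

def completeBell : ℕ → R
  | 0 => 1
  | n + 1 => ∑ k ∈ range (n + 1), n.choose k * x (k + 1) * completeBell (n - k)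

theorem partitionWeight_empty : partitionWeight x (∅ : Finset α) = 1 := by
  have hparts (P : Finpartition (∅ : Finset α)) : P.parts = ∅ :=
    Finpartition.parts_eq_empty_iff.2 rfl
  have : Unique (Finpartition (∅ : Finset α)) :=
    ⟨⟨Finpartition.empty _⟩, fun P => Finpartition.ext (by rw [hparts, hparts])⟩
  rw [partitionWeight, Fintype.sum_unique, hparts, prod_empty]

theorem sum_finpartition_insert_part_eq {a : α} {s T : Finset α} (ha : a ∉ s) (hT : T ⊆ s) :
    ∑ P : Finpartition (insert a s) with (P.part a).erase a = T, ∏ Y ∈ P.parts, x #Y =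
      x (#T + 1) * partitionWeight x (s \ T) := by
  have haT : a ∉ T := fun h => ha (hT h)
  have hne : insert a T ≠ ⊥ := insert_ne_empty a T
  have hdisj : Disjoint (s \ T) (insert a T) := by
    rw [disjoint_insert_right]
    exact ⟨by simp [ha], sdiff_disjoint⟩
  have hsup : s \ T ⊔ insert a T = insert a s := by
    rw [sup_eq_union, union_insert, sdiff_union_of_subset hT]
  have hsdiff : insert a s \ insert a T = s \ T := by
    rw [insert_sdiff_insert, sdiff_insert_of_notMem ha]
  have hfiber (P : Finpartition (insert a s)) : (P.part a).erase a = T ↔ insert a T ∈ P.parts := by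
    refine ⟨fun h => ?_, fun h => ?_⟩
    · rw [← h, insert_erase (P.mem_part (mem_insert_self a s))]
      exact P.part_mem.2 (mem_insert_self a s)
    · rw [P.part_eq_of_mem h (mem_insert_self a T), erase_insert haT]
  rw [partitionWeight, mul_sum]
  refine sum_nbij' (fun P => (P.avoid (insert a T)).copy hsdiff)
    (fun Q => Q.extend hne hdisj hsup) (fun _ _ => mem_univ _) (fun Q _ => ?_)
    (fun P hP => ?_) (fun Q _ => ?_) (fun P hP => ?_)
  · rw [mem_filter, hfiber, Finpartition.extend_parts]
    exact ⟨mem_univ _, mem_insert_self _ _⟩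
  · rw [mem_filter, hfiber] at hP
    ext1
    rw [Finpartition.extend_parts, Finpartition.copy_parts, P.parts_avoid_of_mem hP.2,
      insert_erase hP.2]
  · have hnew : insert a T ∉ Q.parts := fun h => by
      simpa [ha] using Q.le h (mem_insert_self a T)
    ext1
    rw [Finpartition.copy_parts, Finpartition.parts_avoid_of_mem _ (by simp),
      Finpartition.extend_parts, erase_insert hnew]
  · rw [mem_filter, hfiber] at hP
    rw [Finpartition.copy_parts, P.parts_avoid_of_mem hP.2, ← mul_prod_erase _ _ hP.2,
      card_insert_of_notMem haT]

theorem partitionWeight_insert {a : α} {s : Finset α} (ha : a ∉ s) :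
    partitionWeight x (insert a s) = ∑ T ∈ s.powerset, x (#T + 1) * partitionWeight x (s \ T) := by
  rw [partitionWeight, ← sum_fiberwise_of_maps_to (g := fun P => (P.part a).erase a)
    (t := s.powerset) fun P _ => ?_]
  · exact sum_congr rfl fun T hT => sum_finpartition_insert_part_eq x ha (mem_powerset.1 hT)
  · rw [mem_powerset, ← subset_insert_iff]
    exact P.le (P.part_mem.2 (mem_insert_self a s))

theorem partitionWeight_eq_completeBell (s : Finset α) :
    partitionWeight x s = completeBell x #s := by
  induction s using Finset.strongInduction with
  | H s ih =>
    obtain rfl | ⟨a, has⟩ := s.eq_empty_or_nonempty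
    · rw [partitionWeight_empty, card_empty, completeBell]
    rw [← insert_erase has, partitionWeight_insert x (notMem_erase a s),
      card_insert_of_notMem (notMem_erase a s), completeBell]
    calc ∑ T ∈ (s.erase a).powerset, x (#T + 1) * partitionWeight x (s.erase a \ T)
        = ∑ T ∈ (s.erase a).powerset, x (#T + 1) * completeBell x (#(s.erase a) - #T) := by
          refine sum_congr rfl fun T hT => ?_
          rw [mem_powerset] at hT
          rw [ih _ ((sdiff_subset).trans_ssubset (erase_ssubset has)), card_sdiff_of_subset hT]
      _ = _ := by
          rw [sum_powerset_apply_card (fun k => x (k + 1) * completeBell x (#(s.erase a) - k))]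
          simp only [nsmul_eq_mul, mul_assoc]

end PartitionWeight

/-- The recursion `A_{m+1} = ∑_{k=0}^{m} (m choose k) (k+1)! A_{m-k}`. -/
theorem stmt_9 (m : ℕ) :
    A (m + 1) = ∑ k ∈ Finset.range (m + 1), m.choose k * (k + 1).factorial * A (m - k) := by
  have hA (n : ℕ) : A n = completeBell Nat.factorial n := by
    exact (partitionWeight_eq_completeBell Nat.factorial (univ : Finset (Fin n))).trans
      (by rw [card_univ, Fintype.card_fin])
  simp only [hA, completeBell, Nat.cast_id]
end
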